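/- arXiv:2409.04157 — 10 statements merged into one kernel-verified Lean document; each statement's English description precedes it below -/
import Mathlib

section
/- There exists exactly one λ ∈ ℝ satisfying the scalar linear complementarity relation: Σᵢ (φ(λ)ᵢ − aᵢ) ≥ 0, λmax − λ ≥ 0, and (Σᵢ (φ(λ)ᵢ − aᵢ))·(λmax − λ) = 0. -/
/-! The left-hand sum is an affine function `K - λ S` of `λ` with slope `S = ∑ 1/qᵢ > 0`, so it is
strictly decreasing with a unique zero `λ₀ = K / S`. For any strictly decreasing `f` with a zero `λ₀`,
the complementarity problem `0 ≤ f λ`, `λ ≤ λmax`, `f λ (λmax - λ) = 0` has the unique solution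
`min λmax λ₀`. -/

open Finset

section Complementarity

variable {α : Type*} [Ring α] [LinearOrder α] [IsStrictOrderedRing α]

theorem existsUnique_complementarity_of_strictAnti {f : α → α} (hf : StrictAnti f) {x₀ : α}
    (hx₀ : f x₀ = 0) (M : α) :
    ∃! x, 0 ≤ f x ∧ 0 ≤ M - x ∧ f x * (M - x) = 0 := by
  refine ⟨min M x₀, ?_, ?_⟩
  · rcases le_total M x₀ with h | h
    · rw [min_eq_left h, sub_self, mul_zero]
      exact ⟨hx₀ ▸ hf.antitone h, le_rfl, rfl⟩
    · rw [min_eq_right h, hx₀, zero_mul]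
      exact ⟨le_rfl, sub_nonneg.mpr h, rfl⟩
  · rintro y ⟨hfy, hyM, hprod⟩
    rcases mul_eq_zero.mp hprod with hzero | hM
    · have hy : y = x₀ := hf.injective (hzero.trans hx₀.symm)
      subst hy
      exact (min_eq_right (sub_nonneg.mp hyM)).symm
    · obtain rfl : y = M := (sub_eq_zero.mp hM).symm
      exact (min_eq_left (hf.le_iff_ge.mp (hx₀ ▸ hfy))).symm

theorem strictAnti_sub_mul (K : α) {S : α} (hS : 0 < S) : StrictAnti fun x => K - x * S :=
  fun _ _ hxy => sub_lt_sub_left (mul_lt_mul_of_pos_right hxy hS) K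

end Complementarity

theorem sum_neg_add_div_sub {ι : Type*} [Fintype ι] (q c a : ι → ℝ) (hq : ∀ i, q i ≠ 0) (x : ℝ) :
    ∑ i, (-(x + c i) / q i - a i) = ∑ i, (-c i / q i - a i) - x * ∑ i, 1 / q i := by
  rw [mul_sum, ← sum_sub_distrib]
  refine sum_congr rfl fun i _ => ?_
  field_simp [hq i]
  ring

/-- There exists exactly one `lam` satisfying the scalar linear complementarity relation
`∑ i, (φ lam i - a i) ≥ 0`, `lamMax - lam ≥ 0`, `(∑ i, (φ lam i - a i)) * (lamMax - lam) = 0`,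
where `φ lam i = -(lam + c₀ i) / q i`. -/
theorem stmt_0 (N : ℕ) (hN : 0 < N) (q c₀ a : Fin N → ℝ) (hq : ∀ i, 0 < q i)
    (lamMax : ℝ) (φ : ℝ → Fin N → ℝ)
    (hφ : ∀ lam i, φ lam i = -(lam + c₀ i) / q i) :
    ∃! lam : ℝ,
      0 ≤ ∑ i, (φ lam i - a i) ∧ 0 ≤ lamMax - lam ∧
        (∑ i, (φ lam i - a i)) * (lamMax - lam) = 0 := by
  set K := ∑ i, (-c₀ i / q i - a i)
  set S := ∑ i, 1 / q i
  have hS : 0 < S :=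
    sum_pos (fun i _ => one_div_pos.mpr (hq i)) (univ_nonempty_iff.mpr (Fin.pos_iff_nonempty.mp hN))
  have hsum (lam : ℝ) : ∑ i, (φ lam i - a i) = K - lam * S := by
    simp only [hφ]
    exact sum_neg_add_div_sub q c₀ a (fun i => (hq i).ne') lam
  have hzero : K - K / S * S = 0 := by rw [div_mul_cancel₀ K hS.ne', sub_self]
  simp only [hsum]
  exact existsUnique_complementarity_of_strictAnti (strictAnti_sub_mul K hS) hzero lamMax
end

section
/- Suppose (x, λ, u, π₁, π₂, ν) ∈ ℝ^N × ℝ × ℝ^N × ℝ × ℝ^N × ℝ satisfies the KKT system: u + π₂ = 0; qᵢ·π₂ᵢ + ν = 0 for all i; π₁ + Σᵢ π₂ᵢ = 0; qᵢ·xᵢ + c₀ᵢ + uᵢ + λ = 0 for all i; Σᵢ xᵢ = Σᵢ aᵢ; π₁ ≥ 0, λmax − λ ≥ 0, and π₁·(λmax − λ) = 0. Then: uᵢ = ν/qᵢ for all i, π₁ = (Σᵢ 1/qᵢ)·ν, π₂ᵢ = −ν/qᵢ for all i, ν = (Σᵢ 1/qᵢ²)⁻¹ · Σᵢ (φ(λ)ᵢ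 − aᵢ), xᵢ = φ(λ)ᵢ − ν/qᵢ² for all i, and λ satisfies the scalar linear complementarity relation Σᵢ (φ(λ)ᵢ − aᵢ) ≥ 0, λmax − λ ≥ 0, (Σᵢ (φ(λ)ᵢ − aᵢ))·(λmax − λ) = 0. -/
/-!
Stationarity in `π₂` expresses every multiplier through `ν`: `π₂ᵢ = -ν/qᵢ`, `uᵢ = ν/qᵢ`,
`π₁ = (∑ 1/qᵢ) ν`, and then `xᵢ = φ(λ)ᵢ - ν/qᵢ²`. Summing `x` against the budget constraint
gives `∑ (φ(λ)ᵢ - aᵢ) = (∑ 1/qᵢ²) ν`. Both `π₁` and `∑ (φ(λ)ᵢ - aᵢ)` are thus positive multiples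
of `ν`, so the complementarity of `π₁` with `λmax - λ` transfers to `∑ (φ(λ)ᵢ - aᵢ)`.
-/

open Finset

theorem eq_neg_div_of_mul_add_eq_zero {q p ν : ℝ} (hq : q ≠ 0) (h : q * p + ν = 0) :
    p = -ν / q := by
  rw [eq_div_iff hq]
  linarith

theorem sum_div_eq_sum_one_div_mul {ι : Type*} [Fintype ι] (f : ι → ℝ) (ν : ℝ) :
    ∑ i, ν / f i = (∑ i, 1 / f i) * ν := by
  rw [sum_mul]
  exact sum_congr rfl fun i _ => by ring

/-- Any solution of the KKT system of the minimal-adjustment problem satisfies the stated closed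
forms, and its price component satisfies the scalar linear complementarity relation. -/
theorem stmt_2 (N : ℕ) (hN : 0 < N) (q c₀ a : Fin N → ℝ) (hq : ∀ i, 0 < q i)
    (lamMax : ℝ) (φ : ℝ → Fin N → ℝ)
    (hφ : ∀ lam i, φ lam i = -(lam + c₀ i) / q i)
    (x u π₂ : Fin N → ℝ) (lam π₁ ν : ℝ)
    (h1 : ∀ i, u i + π₂ i = 0)
    (h2 : ∀ i, q i * π₂ i + ν = 0)
    (h3 : π₁ + ∑ i, π₂ i = 0)
    (h4 : ∀ i, q i * x i + c₀ i + u i + lam = 0)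
    (h5 : ∑ i, x i = ∑ i, a i)
    (h6 : 0 ≤ π₁) (h7 : 0 ≤ lamMax - lam) (h8 : π₁ * (lamMax - lam) = 0) :
    (∀ i, u i = ν / q i) ∧
      π₁ = (∑ i, 1 / q i) * ν ∧
      (∀ i, π₂ i = -ν / q i) ∧
      ν = (∑ i, 1 / (q i) ^ 2)⁻¹ * ∑ i, (φ lam i - a i) ∧
      (∀ i, x i = φ lam i - ν / (q i) ^ 2) ∧
      (0 ≤ ∑ i, (φ lam i - a i) ∧ 0 ≤ lamMax - lam ∧
        (∑ i, (φ lam i - a i)) * (lamMax - lam) = 0) := by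
  have hq0 : ∀ i, q i ≠ 0 := fun i => (hq i).ne'
  have hπ₂ : ∀ i, π₂ i = -ν / q i := fun i => eq_neg_div_of_mul_add_eq_zero (hq0 i) (h2 i)
  have hu : ∀ i, u i = ν / q i := fun i => by
    rw [eq_neg_of_add_eq_zero_left (h1 i), hπ₂, neg_div, neg_neg]
  have hπ₁ : π₁ = (∑ i, 1 / q i) * ν := by
    simp only [eq_neg_of_add_eq_zero_left h3, hπ₂, neg_div, sum_neg_distrib, neg_neg]
    exact sum_div_eq_sum_one_div_mul q ν
  have hx : ∀ i, x i = φ lam i - ν / q i ^ 2 := fun i => by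
    have h := h4 i
    rw [hu] at h
    rw [hφ]
    field_simp [hq0 i] at h ⊢
    linear_combination h
  have hgap : ∑ i, (φ lam i - a i) = (∑ i, 1 / q i ^ 2) * ν := by
    rw [sum_sub_distrib, ← h5, sum_congr rfl fun i _ => hx i, sum_sub_distrib,
      sum_div_eq_sum_one_div_mul]
    ring
  have hne : (univ : Finset (Fin N)).Nonempty := univ_nonempty_iff.mpr ⟨⟨0, hN⟩⟩
  have hS₁ : 0 < ∑ i, 1 / q i := sum_pos (fun i _ => one_div_pos.2 (hq i)) hne
  have hS₂ : 0 < ∑ i, 1 / q i ^ 2 := sum_pos (fun i _ => one_div_pos.2 (pow_pos (hq i) 2)) hne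
  have hν : 0 ≤ ν := nonneg_of_mul_nonneg_right (hπ₁ ▸ h6) hS₁
  have hνcompl : ν * (lamMax - lam) = 0 := by
    rw [hπ₁, mul_assoc] at h8
    exact (mul_eq_zero.1 h8).resolve_left hS₁.ne'
  refine ⟨hu, hπ₁, hπ₂, by rw [hgap, inv_mul_cancel_left₀ hS₂.ne'], hx, ?_, h7, ?_⟩
  · rw [hgap]
    positivity
  · rw [hgap, mul_assoc, hνcompl, mul_zero]
end

section
/- Suppose λ ∈ ℝ satisfies the scalar linear complementarity relation Σᵢ (φ(λ)ᵢ − aᵢ) ≥ 0, λmax − λ ≥ 0, (Σᵢ (φ(λ)ᵢ − aᵢ))·(λmax − λ) = 0. Define ν := (Σᵢ 1/qᵢ²)⁻¹ · Σᵢ (φ(λ)ᵢ − aᵢ), uᵢ := ν/qᵢ, π₁ := (Σᵢ 1/qᵢ)·ν, π₂ᵢ := −ν/qᵢ, and xᵢ := φ(λ)ᵢ − ν/qᵢ². Then (x, λ, u, π₁, π₂, ν) satisfies the KKT system: u + π₂ = 0; qᵢ·π₂ᵢ + ν = 0 for all i; π₁ + Σᵢ π₂ᵢ = 0; qᵢ·xᵢ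 + c₀ᵢ + uᵢ + λ = 0 for all i; Σᵢ xᵢ = Σᵢ aᵢ; π₁ ≥ 0, λmax − λ ≥ 0, and π₁·(λmax − λ) = 0. -/
/-- Conversely, from any solution `lam` of the scalar linear complementarity relation, the stated
closed forms yield a solution of the KKT system of the minimal-adjustment problem. -/
theorem stmt_3 (N : ℕ) (hN : 0 < N) (q c₀ a : Fin N → ℝ) (hq : ∀ i, 0 < q i)
    (lamMax : ℝ) (φ : ℝ → Fin N → ℝ)
    (hφ : ∀ lam i, φ lam i = -(lam + c₀ i) / q i)
    (lam : ℝ)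
    (hlcp1 : 0 ≤ ∑ i, (φ lam i - a i))
    (hlcp2 : 0 ≤ lamMax - lam)
    (hlcp3 : (∑ i, (φ lam i - a i)) * (lamMax - lam) = 0)
    (ν π₁ : ℝ) (u π₂ x : Fin N → ℝ)
    (hν : ν = (∑ i, 1 / (q i) ^ 2)⁻¹ * ∑ i, (φ lam i - a i))
    (hu : ∀ i, u i = ν / q i)
    (hπ₁ : π₁ = (∑ i, 1 / q i) * ν)
    (hπ₂ : ∀ i, π₂ i = -ν / q i)
    (hx : ∀ i, x i = φ lam i - ν / (q i) ^ 2) :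
    (∀ i, u i + π₂ i = 0) ∧
      (∀ i, q i * π₂ i + ν = 0) ∧
      π₁ + ∑ i, π₂ i = 0 ∧
      (∀ i, q i * x i + c₀ i + u i + lam = 0) ∧
      ∑ i, x i = ∑ i, a i ∧
      0 ≤ π₁ ∧ 0 ≤ lamMax - lam ∧ π₁ * (lamMax - lam) = 0 := by

  have hQpos : 0 < ∑ i, 1 / (q i) ^ 2 := by
    apply Finset.sum_pos
    · intro i _
      have := hq i
      positivity
    · exact Finset.univ_nonempty_iff.mpr (Fin.pos_iff_nonempty.mp hN)
  have hνS : ν * ∑ i, 1 / (q i) ^ 2 = ∑ i, (φ lam i - a i) := by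
    rw [hν]; field_simp
  have hνnn : 0 ≤ ν := by
    rw [hν]; exact mul_nonneg (inv_nonneg.mpr hQpos.le) hlcp1
  have hνc : ν * (lamMax - lam) = 0 := by
    rw [hν, mul_assoc, hlcp3, mul_zero]
  refine ⟨?_, ?_, ?_, ?_, ?_, ?_, hlcp2, ?_⟩
  · intro i; rw [hu i, hπ₂ i]; ring
  · intro i; rw [hπ₂ i]; field_simp [(hq i).ne']; ring
  · rw [hπ₁]
    have h1 : ∑ i, π₂ i = ∑ i, -(1 / q i * ν) :=
      Finset.sum_congr rfl fun i _ => by rw [hπ₂ i]; ring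
    rw [h1, Finset.sum_neg_distrib, Finset.sum_mul]
    ring
  · intro i
    have hqi := (hq i).ne'
    rw [hx i, hu i, hφ lam i]
    field_simp
    ring
  · have : ∑ i, x i = (∑ i, φ lam i) - ν * ∑ i, 1 / (q i) ^ 2 := by
      rw [Finset.sum_congr rfl (fun i _ => hx i), Finset.sum_sub_distrib, Finset.mul_sum]
      congr 1; apply Finset.sum_congr rfl; intro i _; rw [div_eq_mul_inv, one_div, mul_comm]
    rw [this, hνS, Finset.sum_sub_distrib]
    ring
  · rw [hπ₁]
    apply mul_nonneg _ hνnn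
    apply Finset.sum_nonneg; intro i _
    exact one_div_nonneg.mpr (hq i).le
  · rw [hπ₁, mul_assoc, hνc, mul_zero]
end

section
/- The KKT system in (x, λ, u, π₁, π₂, ν) ∈ ℝ^N × ℝ × ℝ^N × ℝ × ℝ^N × ℝ given by: u + π₂ = 0; qᵢ·π₂ᵢ + ν = 0 for all i; π₁ + Σᵢ π₂ᵢ = 0; qᵢ·xᵢ + c₀ᵢ + uᵢ + λ = 0 for all i; Σᵢ xᵢ = Σᵢ aᵢ; π₁ ≥ 0, λmax − λ ≥ 0, π₁·(λmax − λ) = 0, has exactly one solution. -/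
/-- The KKT system of the minimal-adjustment problem, in the variables
`(x, lam, u, π₁, π₂, ν)`, has exactly one solution. -/
theorem stmt_4 (N : ℕ) (hN : 0 < N) (q c₀ a : Fin N → ℝ) (hq : ∀ i, 0 < q i)
    (lamMax : ℝ) :
    ∃! p : (Fin N → ℝ) × ℝ × (Fin N → ℝ) × ℝ × (Fin N → ℝ) × ℝ,
      (∀ i, p.2.2.1 i + p.2.2.2.2.1 i = 0) ∧
      (∀ i, q i * p.2.2.2.2.1 i + p.2.2.2.2.2 = 0) ∧
      p.2.2.2.1 + ∑ i, p.2.2.2.2.1 i = 0 ∧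
      (∀ i, q i * p.1 i + c₀ i + p.2.2.1 i + p.2.1 = 0) ∧
      ∑ i, p.1 i = ∑ i, a i ∧
      0 ≤ p.2.2.2.1 ∧ 0 ≤ lamMax - p.2.1 ∧ p.2.2.2.1 * (lamMax - p.2.1) = 0 := by
  have hqne : ∀ i, q i ≠ 0 := fun i => (hq i).ne'
  obtain ⟨S, hS_def⟩ : ∃ S : ℝ, S = ∑ i, 1 / q i := ⟨_, rfl⟩
  obtain ⟨T, hT_def⟩ : ∃ T : ℝ, T = ∑ i, (1 / q i) ^ 2 := ⟨_, rfl⟩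
  obtain ⟨C, hC_def⟩ : ∃ C : ℝ, C = ∑ i, c₀ i / q i := ⟨_, rfl⟩
  obtain ⟨A, hA_def⟩ : ∃ A : ℝ, A = ∑ i, a i := ⟨_, rfl⟩
  have hne : (Finset.univ : Finset (Fin N)).Nonempty := by
    simpa [Finset.univ_nonempty_iff] using Fin.pos_iff_nonempty.mp hN
  have hS : 0 < S := hS_def ▸ Finset.sum_pos (fun i _ => by have := hq i; positivity) hne
  have hT : 0 < T := hT_def ▸ Finset.sum_pos (fun i _ => by have := hq i; positivity) hne
  obtain ⟨lam0, hlam0_def⟩ : ∃ l : ℝ, l = -(A + C) / S := ⟨_, rfl⟩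
  have hl0S : lam0 * S = -(A + C) := by rw [hlam0_def]; field_simp
  -- key sum identity
  have key : ∀ ν lam : ℝ, (∑ i, -(c₀ i + ν / q i + lam) / q i) = -C - ν * T - lam * S := by
    intro ν lam
    have h1 : ∀ i : Fin N, -(c₀ i + ν / q i + lam) / q i
        = -(c₀ i / q i) - ν * (1 / q i) ^ 2 - lam * (1 / q i) := by
      intro i
      have := hqne i
      field_simp
      ring
    rw [Finset.sum_congr rfl fun i _ => h1 i, Finset.sum_sub_distrib, Finset.sum_sub_distrib,
      ← Finset.mul_sum, ← Finset.mul_sum, Finset.sum_neg_distrib, hC_def, hS_def, hT_def]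
  have keypi : ∀ ν : ℝ, (∑ i : Fin N, -(ν / q i)) = -(ν * S) := by
    intro ν
    rw [hS_def, Finset.mul_sum, ← Finset.sum_neg_distrib]
    exact Finset.sum_congr rfl fun i _ => by ring
  obtain ⟨lam, hlam_def⟩ : ∃ l : ℝ, l = min lamMax lam0 := ⟨_, rfl⟩
  obtain ⟨ν, hν_def⟩ : ∃ v : ℝ, v = (lam0 - lam) * S / T := ⟨_, rfl⟩
  have hlam_le : lam ≤ lamMax := hlam_def ▸ min_le_left _ _
  have hlam_le0 : lam ≤ lam0 := hlam_def ▸ min_le_right _ _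
  have hν_nonneg : 0 ≤ ν := by
    rw [hν_def]
    have h := sub_nonneg.mpr hlam_le0
    positivity
  have hνT : ν * T = (lam0 - lam) * S := by rw [hν_def]; field_simp
  refine ⟨⟨fun i => -(c₀ i + ν / q i + lam) / q i, lam, fun i => ν / q i, ν * S,
      fun i => -(ν / q i), ν⟩, ⟨?_, ?_, ?_, ?_, ?_, ?_, ?_, ?_⟩, ?_⟩
  · intro i; ring
  · intro i
    show q i * -(ν / q i) + ν = 0
    have := hqne i
    field_simp
    ring
  · show ν * S + ∑ i : Fin N, -(ν / q i) = 0
    rw [keypi]; ring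
  · intro i
    show q i * (-(c₀ i + ν / q i + lam) / q i) + c₀ i + ν / q i + lam = 0
    have := hqne i
    field_simp
    ring
  · show (∑ i, -(c₀ i + ν / q i + lam) / q i) = ∑ i, a i
    rw [key, ← hA_def]
    linear_combination -hνT - hl0S
  · show (0:ℝ) ≤ ν * S
    positivity
  · show 0 ≤ lamMax - lam
    linarith
  · show ν * S * (lamMax - lam) = 0
    rcases le_or_gt lam0 lamMax with h | h
    · have h1 : lam = lam0 := hlam_def ▸ min_eq_right h
      have h2 : ν = 0 := by rw [hν_def, h1]; ring
      rw [h2]; ring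
    · have h1 : lam = lamMax := hlam_def ▸ min_eq_left h.le
      rw [h1]; ring
  · -- uniqueness
    rintro ⟨x', lam', u', π₁', π₂', ν'⟩ ⟨h1, h2, h3, h4, h5, h6, h7, h8⟩
    simp only [] at h1 h2 h3 h4 h5 h6 h7 h8
    have hπ₂ : ∀ i, π₂' i = -(ν' / q i) := by
      intro i
      have h := h2 i
      have hne := hqne i
      field_simp
      linear_combination h
    have hu : ∀ i, u' i = ν' / q i := by
      intro i
      have h := h1 i
      rw [hπ₂ i] at h
      linarith
    have hπ₁ : π₁' = ν' * S := by
      rw [Finset.sum_congr rfl fun i _ => hπ₂ i, keypi] at h3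
      linarith
    have hx : ∀ i, x' i = -(c₀ i + ν' / q i + lam') / q i := by
      intro i
      have h := h4 i
      rw [hu i] at h
      rw [eq_div_iff (hqne i)]
      linear_combination h
    have hsum : ν' * T + lam' * S = lam0 * S := by
      rw [Finset.sum_congr rfl fun i _ => hx i, key, ← hA_def] at h5
      linear_combination -h5 - hl0S
    have hν'_nonneg : 0 ≤ ν' := by
      have h6' : 0 ≤ S * ν' := by rw [mul_comm]; rw [hπ₁] at h6; exact h6
      exact nonneg_of_mul_nonneg_right h6' hS
    have hlam'_le : lam' ≤ lamMax := by linarith [h7]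
    have hlamν : lam' = lam ∧ ν' = ν := by
      rw [hπ₁] at h8
      rcases mul_eq_zero.mp h8 with h | h
      · rcases mul_eq_zero.mp h with h | h
        · have hlam'0 : lam' = lam0 := by
            rw [h] at hsum
            exact mul_right_cancel₀ hS.ne' (by linarith : lam' * S = lam0 * S)
          have hle : lam0 ≤ lamMax := hlam'0 ▸ hlam'_le
          have hl : lam = lam0 := hlam_def ▸ min_eq_right hle
          exact ⟨by rw [hlam'0, hl], by rw [h, hν_def, hl]; ring⟩
        · exact absurd h hS.ne'
      · have hlm : lam' = lamMax := by linarith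
        rw [hlm] at hsum
        have h9 : 0 ≤ S * (lam0 - lamMax) := by
          nlinarith [mul_nonneg hν'_nonneg hT.le]
        have hge : lamMax ≤ lam0 := by
          have := nonneg_of_mul_nonneg_right h9 hS
          linarith
        have hl : lam = lamMax := hlam_def ▸ min_eq_left hge
        have hνeq : ν' * T = ν * T := by
          rw [hνT, hl]
          linear_combination hsum
        exact ⟨by rw [hlm, hl], mul_right_cancel₀ hT.ne' hνeq⟩
    obtain ⟨hl, hv⟩ := hlamν
    refine Prod.ext ?_ (Prod.ext ?_ (Prod.ext ?_ (Prod.ext ?_ (Prod.ext ?_ ?_))))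
    · funext i
      show x' i = -(c₀ i + ν / q i + lam) / q i
      rw [hx i, hl, hv]
    · exact hl
    · funext i
      show u' i = ν / q i
      rw [hu i, hv]
    · show π₁' = ν * S
      rw [hπ₁, hv]
    · funext i
      show π₂' i = -(ν / q i)
      rw [hπ₂ i, hv]
    · exact hv
end

section
/- Consider the set S := {(x, λ, u) ∈ ℝ^N × ℝ × ℝ^N : λ ≤ λmax, qᵢ·xᵢ + c₀ᵢ + λ + uᵢ = 0 for all i, and Σᵢ xᵢ = Σᵢ aᵢ}. Then S is nonempty, and there exists exactly one point (x*, λ*, u*) ∈ S at which the function (x, λ, u) ↦ (1/2)·Σᵢ uᵢ² attains its minimum over S. -/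
/-!
Solving the equations `qᵢ xᵢ + c₀ᵢ + λ + uᵢ = 0` for `x`, and then `∑ xᵢ = ∑ aᵢ` for `λ`, shows
that a feasible point is determined by its `u`, and since `∑ 1/qᵢ > 0` the condition `λ ≤ λmax`
says that `u` lies in a half-space `{u | b ≤ ⟪w, u⟫}` with `wᵢ = 1/qᵢ`. A half-space has a unique
point of least norm, `p = (max b 0 / ‖w‖²) • w`: for `u` in it,
`‖u‖² = ‖p‖² + 2⟪p, u - p⟫ + ‖u - p‖²` and the cross term is nonnegative.
-/

open Finset WithLp RealInnerProductSpace

section HalfSpace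

variable {E : Type*} [NormedAddCommGroup E] [InnerProductSpace ℝ E]

noncomputable def halfSpaceMinNormPoint (w : E) (b : ℝ) : E := (max b 0 / ‖w‖ ^ 2) • w

lemma inner_halfSpaceMinNormPoint {w : E} (hw : w ≠ 0) (b : ℝ) :
    ⟪w, halfSpaceMinNormPoint w b⟫ = max b 0 := by
  have : ‖w‖ ≠ 0 := norm_ne_zero_iff.2 hw
  rw [halfSpaceMinNormPoint, real_inner_smul_right, real_inner_self_eq_norm_sq]
  field_simp

lemma sq_norm_halfSpaceMinNormPoint_add_sq_norm_sub_le {w : E} (hw : w ≠ 0) {b : ℝ} {u : E}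
    (hu : b ≤ ⟪w, u⟫) :
    ‖halfSpaceMinNormPoint w b‖ ^ 2 + ‖u - halfSpaceMinNormPoint w b‖ ^ 2 ≤ ‖u‖ ^ 2 := by
  set p := halfSpaceMinNormPoint w b
  have hcross : ⟪p, u - p⟫ = max b 0 / ‖w‖ ^ 2 * (⟪w, u⟫ - max b 0) := by
    rw [show ⟪p, u - p⟫ = max b 0 / ‖w‖ ^ 2 * ⟪w, u - p⟫ from real_inner_smul_left _ _ _,
      inner_sub_right, inner_halfSpaceMinNormPoint hw]
  have hcross_nonneg : 0 ≤ ⟪p, u - p⟫ := by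
    rw [hcross]
    rcases le_total b 0 with hb | hb
    · simp [max_eq_right hb]
    · rw [max_eq_left hb]
      exact mul_nonneg (by positivity) (by linarith)
  have := norm_add_sq_real p (u - p)
  rw [add_sub_cancel] at this
  linarith

end HalfSpace

section Allocation

variable {ι : Type*} [Fintype ι] (q c₀ a : ι → ℝ) (lamMax : ℝ)

def feasibleSet : Set ((ι → ℝ) × ℝ × (ι → ℝ)) :=
  {p | p.2.1 ≤ lamMax ∧ (∀ i, q i * p.1 i + c₀ i + p.2.1 + p.2.2 i = 0) ∧
    ∑ i, p.1 i = ∑ i, a i}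

noncomputable def multiplierOf (u : ι → ℝ) : ℝ :=
  -(∑ i, a i + ∑ i, c₀ i / q i + ∑ i, u i / q i) / ∑ i, (q i)⁻¹

noncomputable def feasiblePointOf (u : ι → ℝ) : (ι → ℝ) × ℝ × (ι → ℝ) :=
  (fun i => -(c₀ i + multiplierOf q c₀ a u + u i) / q i, multiplierOf q c₀ a u, u)

variable {q c₀ a lamMax}

lemma mem_feasibleSet_iff (hq : ∀ i, q i ≠ 0) (hQ : ∑ i, (q i)⁻¹ ≠ 0)
    {p : (ι → ℝ) × ℝ × (ι → ℝ)} :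
    p ∈ feasibleSet q c₀ a lamMax ↔
      multiplierOf q c₀ a p.2.2 ≤ lamMax ∧ p = feasiblePointOf q c₀ a p.2.2 := by
  obtain ⟨x, l, u⟩ := p
  have hx : (∀ i, q i * x i + c₀ i + l + u i = 0) ↔ x = fun i => -(c₀ i + l + u i) / q i := by
    simp only [funext_iff, eq_div_iff (hq _)]
    exact forall_congr' fun i => by constructor <;> intro h <;> linarith
  have hsum : ∑ i, -(c₀ i + l + u i) / q i = ∑ i, a i ↔ l = multiplierOf q c₀ a u := by
    have : ∑ i, -(c₀ i + l + u i) / q i =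
        -(∑ i, c₀ i / q i + ∑ i, u i / q i + l * ∑ i, (q i)⁻¹) := by
      simp only [mul_sum, ← sum_add_distrib, ← sum_neg_distrib]
      exact sum_congr rfl fun i _ => by field_simp [hq i]; ring
    rw [this, multiplierOf, eq_div_iff hQ]
    constructor <;> intro h <;> linarith
  simp only [feasibleSet, feasiblePointOf, Set.mem_ofPred_eq, Prod.mk.injEq, and_true]
  constructor
  · rintro ⟨hle, hc, hs⟩
    obtain rfl := hx.1 hc
    obtain rfl := hsum.1 hs
    exact ⟨hle, rfl, rfl⟩
  · rintro ⟨hle, rfl, rfl⟩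
    exact ⟨hle, hx.2 rfl, hsum.2 rfl⟩

lemma multiplierOf_le_iff (hQ : 0 < ∑ i, (q i)⁻¹) (u : ι → ℝ) :
    multiplierOf q c₀ a u ≤ lamMax ↔
      -(∑ i, a i + ∑ i, c₀ i / q i + lamMax * ∑ i, (q i)⁻¹) ≤
        ⟪toLp 2 fun i => (q i)⁻¹, toLp 2 u⟫ := by
  have : ⟪toLp 2 fun i => (q i)⁻¹, toLp 2 u⟫ = ∑ i, u i / q i := by
    simp [EuclideanSpace.inner_toLp_toLp, dotProduct, div_eq_mul_inv]
  rw [this, multiplierOf, div_le_iff₀ hQ]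
  constructor <;> intro h <;> linarith

theorem existsUnique_mem_feasibleSet_forall_sum_sq_le [Nonempty ι] (hq : ∀ i, 0 < q i) :
    ∃! p, p ∈ feasibleSet q c₀ a lamMax ∧
      ∀ p' ∈ feasibleSet q c₀ a lamMax, ∑ i, p.2.2 i ^ 2 ≤ ∑ i, p'.2.2 i ^ 2 := by
  have hQ : 0 < ∑ i, (q i)⁻¹ := sum_pos (fun i _ => inv_pos.2 (hq i)) univ_nonempty
  set w : EuclideanSpace ℝ ι := toLp 2 fun i => (q i)⁻¹
  have hw : w ≠ 0 := fun h => by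
    obtain ⟨i⟩ := ‹Nonempty ι›
    simpa [w, (hq i).ne'] using congr_arg (· i) h
  set b := -(∑ i, a i + ∑ i, c₀ i / q i + lamMax * ∑ i, (q i)⁻¹)
  have hmem p : p ∈ feasibleSet q c₀ a lamMax ↔
      b ≤ ⟪w, toLp 2 p.2.2⟫ ∧ p = feasiblePointOf q c₀ a p.2.2 := by
    rw [mem_feasibleSet_iff (fun i => (hq i).ne') hQ.ne', multiplierOf_le_iff hQ]
  set u₀ := halfSpaceMinNormPoint w b
  have hu₀ : feasiblePointOf q c₀ a (ofLp u₀) ∈ feasibleSet q c₀ a lamMax := by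
    refine (hmem _).2 ⟨?_, rfl⟩
    rw [feasiblePointOf, toLp_ofLp, inner_halfSpaceMinNormPoint hw]
    exact le_max_left b 0
  have hle p (hp : p ∈ feasibleSet q c₀ a lamMax) :
      ‖u₀‖ ^ 2 + ‖toLp 2 p.2.2 - u₀‖ ^ 2 ≤ ∑ i, p.2.2 i ^ 2 := by
    simpa [EuclideanSpace.real_norm_sq_eq] using
      sq_norm_halfSpaceMinNormPoint_add_sq_norm_sub_le hw ((hmem p).1 hp).1
  have hnorm : ∑ i, (feasiblePointOf q c₀ a (ofLp u₀)).2.2 i ^ 2 = ‖u₀‖ ^ 2 :=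
    (EuclideanSpace.real_norm_sq_eq u₀).symm
  refine ⟨_, ⟨hu₀, fun p hp => ?_⟩, fun p ⟨hp, hmin⟩ => ?_⟩
  · rw [hnorm]
    linarith [hle p hp, sq_nonneg ‖toLp 2 p.2.2 - u₀‖]
  · have hdist : ‖toLp 2 p.2.2 - u₀‖ ^ 2 ≤ 0 := by linarith [hle p hp, hmin _ hu₀]
    have hu : toLp 2 p.2.2 - u₀ = 0 := by
      rw [← norm_eq_zero]
      nlinarith [norm_nonneg (toLp 2 p.2.2 - u₀)]
    rw [sub_eq_zero] at hu
    rw [((hmem p).1 hp).2, ← hu]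

end Allocation

/-- The feasible set of socially acceptable equilibria is nonempty, and the squared-norm
objective `(1/2) * ∑ i, (u i)^2` attains its minimum over it at exactly one point. -/
theorem stmt_5 (N : ℕ) (hN : 0 < N) (q c₀ a : Fin N → ℝ) (hq : ∀ i, 0 < q i)
    (lamMax : ℝ)
    (S : Set ((Fin N → ℝ) × ℝ × (Fin N → ℝ)))
    (hS : S = {p : (Fin N → ℝ) × ℝ × (Fin N → ℝ) |
        p.2.1 ≤ lamMax ∧ (∀ i, q i * p.1 i + c₀ i + p.2.1 + p.2.2 i = 0) ∧
          ∑ i, p.1 i = ∑ i, a i}) :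
    S.Nonempty ∧
      ∃! p : (Fin N → ℝ) × ℝ × (Fin N → ℝ),
        p ∈ S ∧ ∀ p' ∈ S, (1 / 2) * ∑ i, (p.2.2 i) ^ 2 ≤ (1 / 2) * ∑ i, (p'.2.2 i) ^ 2 := by
  have : Nonempty (Fin N) := ⟨⟨0, hN⟩⟩
  rw [← feasibleSet] at hS
  subst hS
  simp only [mul_le_mul_iff_right₀ (by norm_num : (0 : ℝ) < 1 / 2)]
  refine ⟨?_, existsUnique_mem_feasibleSet_forall_sum_sq_le hq⟩
  obtain ⟨p, ⟨hp, -⟩, -⟩ := existsUnique_mem_feasibleSet_forall_sum_sq_le hq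
  exact ⟨p, hp⟩
end

section
/- Define g : ℝ → ℝ by g(λ) := (1/2)·(Σᵢ 1/qᵢ)·λ² + (Σᵢ (c₀ᵢ/qᵢ + aᵢ))·λ. If λ̄ is a global minimizer of g over the set {λ ∈ ℝ : λ ≤ λmax}, then with ȳᵢ := φ(λ̄)ᵢ, s̄ := Σᵢ (φ(λ̄)ᵢ − aᵢ), and μ̄s := λmax − λ̄, the tuple (ȳ, s̄, λ̄, μ̄s) satisfies: qᵢ·ȳᵢ + c₀ᵢ + λ̄ = 0 for all i; λmax − λ̄ − μ̄s = 0; Σᵢ ȳᵢ − Σᵢ aᵢ = s̄; μ̄s ≥ 0; s̄ ≥ 0; and μ̄s·s̄ = 0. -/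
/-!
At a minimizer `λ̄` of `g` on the half-line `λ ≤ λmax` the first-order conditions hold:
`g'(λ̄) ≤ 0`, with equality unless `λ̄ = λmax`. Since `s̄ = Σᵢ (φ(λ̄)ᵢ - aᵢ) = -g'(λ̄)`, these are
exactly `s̄ ≥ 0` and `μ̄s · s̄ = 0`; the remaining conditions are algebraic identities.
-/

open Set

theorem IsMinOn.hasDerivAt_nonpos_of_Iic {f : ℝ → ℝ} {d x M : ℝ} (hmin : IsMinOn f (Iic M) x)
    (hf : HasDerivAt f d x) (hx : x ≤ M) : d ≤ 0 := by
  have hcone : (-1 : ℝ) ∈ posTangentConeAt (Iic M) x :=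
    mem_posTangentConeAt_of_segment_subset <|
      (convex_Iic M).segment_subset hx (show x + -1 ≤ M by linarith)
  simpa using hmin.localize.hasFDerivWithinAt_nonneg hf.hasFDerivAt.hasFDerivWithinAt hcone

theorem IsMinOn.hasDerivAt_eq_zero_of_lt {f : ℝ → ℝ} {d x M : ℝ} (hmin : IsMinOn f (Iic M) x)
    (hf : HasDerivAt f d x) (hx : x < M) : d = 0 :=
  (hmin.isLocalMin (Iic_mem_nhds hx)).hasDerivAt_eq_zero hf

theorem stmt_7_general (N : ℕ) (q c₀ a : Fin N → ℝ) (hq : ∀ i, 0 < q i)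
    (lamMax : ℝ) (φ : ℝ → Fin N → ℝ)
    (hφ : ∀ lam i, φ lam i = -(lam + c₀ i) / q i)
    (g : ℝ → ℝ)
    (hg : ∀ lam, g lam = (1 / 2) * (∑ i, 1 / q i) * lam ^ 2 + (∑ i, (c₀ i / q i + a i)) * lam)
    (lamBar : ℝ)
    (hmem : lamBar ≤ lamMax)
    (hmin : ∀ lam : ℝ, lam ≤ lamMax → g lamBar ≤ g lam)
    (yBar : Fin N → ℝ) (sBar muS : ℝ)
    (hy : ∀ i, yBar i = φ lamBar i)
    (hs : sBar = ∑ i, (φ lamBar i - a i))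
    (hmu : muS = lamMax - lamBar) :
    (∀ i, q i * yBar i + c₀ i + lamBar = 0) ∧
      lamMax - lamBar - muS = 0 ∧
      (∑ i, yBar i) - (∑ i, a i) = sBar ∧
      0 ≤ muS ∧ 0 ≤ sBar ∧ muS * sBar = 0 := by
  set A := ∑ i, 1 / q i with hA
  set B := ∑ i, (c₀ i / q i + a i) with hB
  have hderiv : HasDerivAt g (A * lamBar + B) lamBar := by
    rw [show g = fun lam ↦ (1 / 2) * A * lam ^ 2 + B * lam from funext hg]
    exact (((hasDerivAt_pow 2 lamBar).const_mul ((1 / 2) * A)).add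
      ((hasDerivAt_id' lamBar).const_mul B)).congr_deriv (by ring)
  have hsBar : sBar = -(A * lamBar + B) := by
    rw [hs, hA, hB, Finset.sum_mul, ← Finset.sum_add_distrib, ← Finset.sum_neg_distrib]
    refine Finset.sum_congr rfl fun i _ ↦ ?_
    rw [hφ]
    ring
  have hminOn : IsMinOn g (Iic lamMax) lamBar := hmin
  refine ⟨fun i ↦ ?_, by rw [hmu]; ring, ?_, by rw [hmu]; linarith, ?_, ?_⟩
  · rw [hy, hφ]
    field_simp [(hq i).ne']
    ring
  · simp only [hs, hy, Finset.sum_sub_distrib]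
  · rw [hsBar, neg_nonneg]
    exact hminOn.hasDerivAt_nonpos_of_Iic hderiv hmem
  · rcases hmem.eq_or_lt with hmax | hlt
    · rw [hmu, hmax, sub_self, zero_mul]
    · rw [hsBar, hminOn.hasDerivAt_eq_zero_of_lt hderiv hlt, neg_zero, mul_zero]

/-- If `lamBar` is a global minimizer of `g` over `{lam | lam ≤ lamMax}`, then the indicated
tuple satisfies the KKT conditions of the modified primal problem. -/
theorem stmt_7 (N : ℕ) (hN : 0 < N) (q c₀ a : Fin N → ℝ) (hq : ∀ i, 0 < q i)
    (lamMax : ℝ) (φ : ℝ → Fin N → ℝ)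
    (hφ : ∀ lam i, φ lam i = -(lam + c₀ i) / q i)
    (g : ℝ → ℝ)
    (hg : ∀ lam, g lam = (1 / 2) * (∑ i, 1 / q i) * lam ^ 2 + (∑ i, (c₀ i / q i + a i)) * lam)
    (lamBar : ℝ)
    (hmem : lamBar ≤ lamMax)
    (hmin : ∀ lam : ℝ, lam ≤ lamMax → g lamBar ≤ g lam)
    (yBar : Fin N → ℝ) (sBar muS : ℝ)
    (hy : ∀ i, yBar i = φ lamBar i)
    (hs : sBar = ∑ i, (φ lamBar i - a i))
    (hmu : muS = lamMax - lamBar) :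
    (∀ i, q i * yBar i + c₀ i + lamBar = 0) ∧
      lamMax - lamBar - muS = 0 ∧
      (∑ i, yBar i) - (∑ i, a i) = sBar ∧
      0 ≤ muS ∧ 0 ≤ sBar ∧ muS * sBar = 0 :=
  stmt_7_general N q c₀ a hq lamMax φ hφ g hg lamBar hmem hmin yBar sBar muS hy hs hmu
end

section
/- A tuple (ȳ, s̄, λ̄, μ̄s) ∈ ℝ^N × ℝ × ℝ × ℝ satisfies the KKT system: qᵢ·ȳᵢ + c₀ᵢ + λ̄ = 0 for all i; λmax − λ̄ − μ̄s = 0; Σᵢ ȳᵢ − Σᵢ aᵢ = s̄; μ̄s ≥ 0; s̄ ≥ 0; μ̄s·s̄ = 0, if and only if λ̄ satisfies the scalar linear complementarity relation Σᵢ (φ(λ̄)ᵢ − aᵢ) ≥ 0, λmax − λ̄ ≥ 0, (Σᵢ (φ(λ̄)ᵢ − aᵢ))·(λmax − λ̄) = 0, and moreover ȳᵢ = φ(λ̄)ᵢ for all i, s̄ = Σᵢ (φ(λ̄)ᵢ − aᵢ), and μ̄s = λmax − λ̄. In particular, such a tuple is unique. -/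
/-!
Stationarity gives `y = φ(λ)` and `μ = λmax - λ`, and the slack equation gives `s` as the excess
`∑ᵢ (φ(λ)ᵢ - aᵢ)`, so the KKT system reduces to a scalar complementarity problem in `λ`. Since
`q > 0`, the excess is strictly decreasing in `λ`, and a complementarity problem
`0 ≤ g λ ⊥ λ ≤ λmax` with strictly decreasing `g` has at most one solution.
-/

open Finset

variable {ι : Type*} [Fintype ι]

def IsKKTPoint (q c₀ a : ι → ℝ) (lamMax : ℝ) (y : ι → ℝ) (s lam mu : ℝ) : Prop :=
  (∀ i, q i * y i + c₀ i + lam = 0) ∧ lamMax - lam - mu = 0 ∧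
    (∑ i, y i) - (∑ i, a i) = s ∧ 0 ≤ mu ∧ 0 ≤ s ∧ mu * s = 0

noncomputable def excess (q c₀ a : ι → ℝ) (lam : ℝ) : ℝ :=
  ∑ i, (-(lam + c₀ i) / q i - a i)

theorem mul_add_add_eq_zero_iff_eq_div {q y c lam : ℝ} (hq : q ≠ 0) :
    q * y + c + lam = 0 ↔ y = -(lam + c) / q := by
  rw [eq_div_iff hq]
  constructor <;> intro h <;> linarith

theorem isKKTPoint_iff {q : ι → ℝ} (hq : ∀ i, q i ≠ 0) (c₀ a : ι → ℝ) (lamMax : ℝ)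
    (y : ι → ℝ) (s lam mu : ℝ) :
    IsKKTPoint q c₀ a lamMax y s lam mu ↔
      ((0 ≤ excess q c₀ a lam ∧ 0 ≤ lamMax - lam ∧ excess q c₀ a lam * (lamMax - lam) = 0) ∧
        (∀ i, y i = -(lam + c₀ i) / q i) ∧ s = excess q c₀ a lam ∧ mu = lamMax - lam) := by
  simp only [IsKKTPoint, mul_add_add_eq_zero_iff_eq_div (hq _)]
  have sum_eq_excess (hy : ∀ i, y i = -(lam + c₀ i) / q i) :
      (∑ i, y i) - (∑ i, a i) = excess q c₀ a lam := by
    rw [excess, sum_sub_distrib, sum_congr rfl fun i _ => hy i]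
  constructor
  · rintro ⟨hy, hmu, rfl, hmu_nonneg, hs_nonneg, hcompl⟩
    obtain rfl : mu = lamMax - lam := by linarith
    rw [sum_eq_excess hy] at hs_nonneg hcompl ⊢
    exact ⟨⟨hs_nonneg, hmu_nonneg, by rw [mul_comm, hcompl]⟩, hy, rfl, rfl⟩
  · rintro ⟨⟨hs_nonneg, hmu_nonneg, hcompl⟩, hy, rfl, rfl⟩
    exact ⟨hy, by ring, sum_eq_excess hy, hmu_nonneg, hs_nonneg, by rw [mul_comm, hcompl]⟩

theorem strictAnti_excess [Nonempty ι] {q : ι → ℝ} (hq : ∀ i, 0 < q i) (c₀ a : ι → ℝ) :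
    StrictAnti (excess q c₀ a) := fun u v huv =>
  sum_lt_sum_of_nonempty univ_nonempty fun i _ => by
    have := div_lt_div_of_pos_right (neg_lt_neg (add_lt_add_left huv (c₀ i))) (hq i)
    linarith

theorem StrictAnti.le_of_complementarity {g : ℝ → ℝ} (hg : StrictAnti g) {M l₁ l₂ : ℝ}
    (h₁ : 0 ≤ g l₁ ∧ 0 ≤ M - l₁ ∧ g l₁ * (M - l₁) = 0)
    (h₂ : 0 ≤ g l₂ ∧ 0 ≤ M - l₂ ∧ g l₂ * (M - l₂) = 0) : l₂ ≤ l₁ := by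
  by_contra! hlt
  have hg₁ : 0 < g l₁ := h₂.1.trans_lt (hg hlt)
  have hM : M - l₁ = 0 := (mul_eq_zero.mp h₁.2.2).resolve_left hg₁.ne'
  linarith [h₂.2.1]

theorem StrictAnti.eq_of_complementarity {g : ℝ → ℝ} (hg : StrictAnti g) {M l₁ l₂ : ℝ}
    (h₁ : 0 ≤ g l₁ ∧ 0 ≤ M - l₁ ∧ g l₁ * (M - l₁) = 0)
    (h₂ : 0 ≤ g l₂ ∧ 0 ≤ M - l₂ ∧ g l₂ * (M - l₂) = 0) : l₁ = l₂ :=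
  le_antisymm (hg.le_of_complementarity h₂ h₁) (hg.le_of_complementarity h₁ h₂)

/-- A tuple satisfies the KKT system of the modified primal problem iff its price component
solves the scalar linear complementarity relation and the other components take the stated closed
forms; in particular the KKT tuple is unique. -/
theorem stmt_8 (N : ℕ) (hN : 0 < N) (q c₀ a : Fin N → ℝ) (hq : ∀ i, 0 < q i)
    (lamMax : ℝ) (φ : ℝ → Fin N → ℝ)
    (hφ : ∀ lam i, φ lam i = -(lam + c₀ i) / q i) :
    (∀ (yBar : Fin N → ℝ) (sBar lamBar muS : ℝ),
        ((∀ i, q i * yBar i + c₀ i + lamBar = 0) ∧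
            lamMax - lamBar - muS = 0 ∧
            (∑ i, yBar i) - (∑ i, a i) = sBar ∧
            0 ≤ muS ∧ 0 ≤ sBar ∧ muS * sBar = 0) ↔
          ((0 ≤ ∑ i, (φ lamBar i - a i) ∧ 0 ≤ lamMax - lamBar ∧
              (∑ i, (φ lamBar i - a i)) * (lamMax - lamBar) = 0) ∧
            (∀ i, yBar i = φ lamBar i) ∧
            sBar = ∑ i, (φ lamBar i - a i) ∧
            muS = lamMax - lamBar)) ∧
      (∀ (y1 : Fin N → ℝ) (s1 l1 m1 : ℝ) (y2 : Fin N → ℝ) (s2 l2 m2 : ℝ),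
        ((∀ i, q i * y1 i + c₀ i + l1 = 0) ∧ lamMax - l1 - m1 = 0 ∧
            (∑ i, y1 i) - (∑ i, a i) = s1 ∧ 0 ≤ m1 ∧ 0 ≤ s1 ∧ m1 * s1 = 0) →
        ((∀ i, q i * y2 i + c₀ i + l2 = 0) ∧ lamMax - l2 - m2 = 0 ∧
            (∑ i, y2 i) - (∑ i, a i) = s2 ∧ 0 ≤ m2 ∧ 0 ≤ s2 ∧ m2 * s2 = 0) →
        y1 = y2 ∧ s1 = s2 ∧ l1 = l2 ∧ m1 = m2) := by
  obtain rfl : φ = fun lam i => -(lam + c₀ i) / q i := funext₂ hφ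
  have kkt_iff := isKKTPoint_iff (fun i => (hq i).ne') c₀ a lamMax
  refine ⟨kkt_iff, fun y₁ s₁ l₁ m₁ y₂ s₂ l₂ m₂ h₁ h₂ => ?_⟩
  obtain ⟨hcompl₁, hy₁, rfl, rfl⟩ := (kkt_iff y₁ s₁ l₁ m₁).mp h₁
  obtain ⟨hcompl₂, hy₂, rfl, rfl⟩ := (kkt_iff y₂ s₂ l₂ m₂).mp h₂
  have : Nonempty (Fin N) := ⟨⟨0, hN⟩⟩
  obtain rfl := (strictAnti_excess hq c₀ a).eq_of_complementarity hcompl₁ hcompl₂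
  exact ⟨funext fun i => (hy₁ i).trans (hy₂ i).symm, rfl, rfl, rfl⟩
end

section
/- Suppose (x*, λ*, ν*) ∈ ℝ^N × ℝ × ℝ satisfies: qᵢ·x*ᵢ + c₀ᵢ + ν*/qᵢ + λ* = 0 for all i; Σᵢ x*ᵢ = Σᵢ aᵢ; ν* ≥ 0; λmax − λ* ≥ 0; ν*·(λmax − λ*) = 0. Suppose also (ȳ, s̄, λ̄, μ̄s) ∈ ℝ^N × ℝ × ℝ × ℝ satisfies: qᵢ·ȳᵢ + c₀ᵢ + λ̄ = 0 for all i; λmax − λ̄ − μ̄s = 0; Σᵢ ȳᵢ − Σᵢ aᵢ = s̄; μ̄s ≥ 0; s̄ ≥ 0; μ̄s·s̄ = 0. Then λ̄ = λ*, ȳᵢ = x*ᵢ + ν*/qᵢ² for all i, and s̄ = (Σᵢ 1/qᵢ²)·ν*. -/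
/-!
Subtracting the two stationarity conditions gives `ȳᵢ = x*ᵢ + ν*/qᵢ² + (λ* - λ̄)/qᵢ`, and summing,
`s̄ = (∑ 1/qᵢ²) ν* + (λ* - λ̄) ∑ 1/qᵢ`. If `λ̄ < λ*` then `μ̄s = λmax - λ̄ > 0`, so `s̄ = 0`, while the
right-hand side is positive; if `λ* < λ̄ ≤ λmax` then `ν* = 0` and the right-hand side is negative,
contradicting `s̄ ≥ 0`. Hence `λ̄ = λ*`.
-/

open Finset

lemma eq_add_div_sq_add_div_of_stationary {K : Type*} [Field K] {q x y c ν l l' : K} (hq : q ≠ 0)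
    (hx : q * x + c + ν / q + l = 0) (hy : q * y + c + l' = 0) :
    y = x + ν / q ^ 2 + (l - l') / q := by
  field_simp at hx ⊢
  linear_combination q * hy - hx

lemma sum_eq_sum_add_of_eq_add_div_sq_add_div {ι K : Type*} [Fintype ι] [Field K]
    {q x y : ι → K} {ν d : K}
    (h : ∀ i, y i = x i + ν / q i ^ 2 + d / q i) :
    ∑ i, y i = ∑ i, x i + (∑ i, 1 / q i ^ 2) * ν + d * ∑ i, 1 / q i := by
  simp only [h, sum_add_distrib, sum_mul, mul_sum, one_div_mul_eq_div, mul_one_div]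

/-- Relation between the optimal socially acceptable equilibrium triple `(x*, lam*, ν*)` and the
primal-dual optimizer `(yBar, sBar, lamBar, muS)` of the modified primal problem. -/
theorem stmt_11 (N : ℕ) (hN : 0 < N) (q c₀ a : Fin N → ℝ) (hq : ∀ i, 0 < q i)
    (lamMax : ℝ)
    (xs : Fin N → ℝ) (lams νs : ℝ)
    (hx1 : ∀ i, q i * xs i + c₀ i + νs / q i + lams = 0)
    (hx2 : ∑ i, xs i = ∑ i, a i)
    (hx3 : 0 ≤ νs) (hx4 : 0 ≤ lamMax - lams) (hx5 : νs * (lamMax - lams) = 0)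
    (yBar : Fin N → ℝ) (sBar lamBar muS : ℝ)
    (hy1 : ∀ i, q i * yBar i + c₀ i + lamBar = 0)
    (hy2 : lamMax - lamBar - muS = 0)
    (hy3 : (∑ i, yBar i) - (∑ i, a i) = sBar)
    (hy4 : 0 ≤ muS) (hy5 : 0 ≤ sBar) (hy6 : muS * sBar = 0) :
    lamBar = lams ∧ (∀ i, yBar i = xs i + νs / (q i) ^ 2) ∧
      sBar = (∑ i, 1 / (q i) ^ 2) * νs := by
  have : Nonempty (Fin N) := ⟨⟨0, hN⟩⟩
  have hS : 0 < ∑ i, 1 / q i := sum_pos (fun i _ => one_div_pos.2 (hq i)) univ_nonempty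
  have hT : 0 ≤ ∑ i, 1 / q i ^ 2 := sum_nonneg fun i _ => by positivity
  have hdiff i : yBar i = xs i + νs / q i ^ 2 + (lams - lamBar) / q i :=
    eq_add_div_sq_add_div_of_stationary (hq i).ne' (hx1 i) (hy1 i)
  have hs : sBar = (∑ i, 1 / q i ^ 2) * νs + (lams - lamBar) * ∑ i, 1 / q i := by
    rw [← hy3, sum_eq_sum_add_of_eq_add_div_sq_add_div hdiff, hx2]
    ring
  have hlam : lamBar = lams := by
    rcases lt_trichotomy lamBar lams with hlt | heq | hgt
    · have hs0 : sBar = 0 := (mul_eq_zero.mp hy6).resolve_left (by linarith)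
      nlinarith [mul_nonneg hT hx3, mul_pos (sub_pos.2 hlt) hS]
    · exact heq
    · have hν : νs = 0 := (mul_eq_zero.mp hx5).resolve_right (by linarith)
      subst hν
      nlinarith [mul_pos (sub_pos.2 hgt) hS]
  refine ⟨hlam, fun i => by rw [hdiff i, hlam]; ring, by rw [hs, hlam]; ring⟩
end

section
/- A tuple (x̄, ρ̄, ε̄, λ̄, ū, π̄, ν̄, μ̄) ∈ ℝ^N × ℝ^N × ℝ^N × ℝ × ℝ^N × ℝ^N × ℝ × ℝ satisfies the equilibrium system: 0 = −qᵢ·x̄ᵢ − c₀ᵢ − ρ̄ᵢ − ūᵢ for all i; 0 = x̄ᵢ − aᵢ − ε̄ᵢ for all i; 0 = ρ̄ᵢ − λ̄ for all i; 0 = Σᵢ ε̄ᵢ; 0 = −ūᵢ/qᵢ − qᵢ·π̄ᵢ − x̄ᵢ − (c₀ᵢ + λmax)/qᵢ for all i; 0 = qᵢ·ūᵢ − ν̄ for all i; 0 = Σᵢ π̄ᵢ + μ̄; ν̄ ≥ 0; μ̄ ≥ 0; ν̄·μ̄ = 0, if and only if: λ̄ satisfies the scalar linear complementarity relation Σᵢ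 (φ(λ̄)ᵢ − aᵢ) ≥ 0, λmax − λ̄ ≥ 0, (Σᵢ (φ(λ̄)ᵢ − aᵢ))·(λmax − λ̄) = 0, and moreover ν̄ = (Σᵢ 1/qᵢ²)⁻¹·Σᵢ (φ(λ̄)ᵢ − aᵢ), x̄ᵢ = φ(λ̄)ᵢ − ν̄/qᵢ², ūᵢ = ν̄/qᵢ, ρ̄ᵢ = λ̄, ε̄ᵢ = x̄ᵢ − aᵢ, π̄ᵢ = (λ̄ − λmax)/qᵢ², and μ̄ = (Σᵢ 1/qᵢ²)·(λmax − λ̄). -/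
/-!
Every equation of the system except the two sums is solved coordinatewise by the closed forms,
in terms of `λ̄` and `ν̄`. With `S = ∑ 1/qᵢ²` and `T(λ) = ∑ (φ(λ)ᵢ - aᵢ)`, the sum `∑ ε̄ᵢ = 0`
becomes `ν̄ = T(λ̄)/S` and `∑ π̄ᵢ + μ̄ = 0` becomes `μ̄ = S (λmax - λ̄)`. Since `S > 0`, these
positive rescalings carry the complementarity of `(ν̄, μ̄)` to that of `(T(λ̄), λmax - λ̄)`.
-/

open Finset

section Field

variable {K : Type*} [Field K]

theorem zero_eq_mul_sub_iff_eq_div {q u ν : K} (hq : q ≠ 0) : 0 = q * u - ν ↔ u = ν / q := by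
  rw [eq_div_iff hq]
  constructor <;> intro h <;> linear_combination -h

theorem stationarity_iff {q c x ρ u p lam ν : K} (hq : q ≠ 0) (hp : p = -(lam + c) / q)
    (hρ : ρ = lam) (hu : u = ν / q) :
    0 = -(q * x) - c - ρ - u ↔ x = p - ν / q ^ 2 := by
  subst p ρ u
  have key : -(q * x) - c - lam - ν / q = -q * (x - (-(lam + c) / q - ν / q ^ 2)) := by
    field_simp
    ring
  rw [key, eq_comm, mul_eq_zero, neg_eq_zero, sub_eq_zero, or_iff_right hq]

theorem costate_iff {q c x u p π lam lamMax ν : K} (hq : q ≠ 0) (hp : p = -(lam + c) / q)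
    (hu : u = ν / q) (hx : x = p - ν / q ^ 2) :
    0 = -u / q - q * π - x - (c + lamMax) / q ↔ π = (lam - lamMax) / q ^ 2 := by
  subst p u x
  have key : -(ν / q) / q - q * π - (-(lam + c) / q - ν / q ^ 2) - (c + lamMax) / q
      = -q * (π - (lam - lamMax) / q ^ 2) := by
    field_simp
    ring
  rw [key, eq_comm, mul_eq_zero, neg_eq_zero, sub_eq_zero, or_iff_right hq]

variable {ι : Type*} [Fintype ι]

theorem zero_eq_sum_iff {ε t w : ι → K} {ν : K} (hε : ∀ i, ε i = t i - ν / w i)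
    (hw : ∑ i, 1 / w i ≠ 0) :
    0 = ∑ i, ε i ↔ ν = (∑ i, 1 / w i)⁻¹ * ∑ i, t i := by
  have hsum : ∑ i, ε i = ∑ i, t i - ν * ∑ i, 1 / w i := by
    simp only [hε, sum_sub_distrib, mul_sum, mul_one_div]
  rw [hsum, eq_inv_mul_iff_mul_eq₀ hw, eq_comm, sub_eq_zero, mul_comm]
  exact eq_comm

theorem zero_eq_sum_add_iff {π w : ι → K} {r s μ : K} (hπ : ∀ i, π i = (s - r) / w i) :
    0 = ∑ i, π i + μ ↔ μ = (∑ i, 1 / w i) * (r - s) := by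
  have hsum : ∑ i, π i = (s - r) * ∑ i, 1 / w i := by
    simp only [hπ, mul_sum, mul_one_div]
  rw [hsum]
  constructor <;> intro h <;> linear_combination -h

end Field

theorem complementarity_rescale_iff {K : Type*} [Field K] [LinearOrder K] [IsStrictOrderedRing K]
    {s x y : K} (hs : 0 < s) :
    (0 ≤ s⁻¹ * x ∧ 0 ≤ s * y ∧ s⁻¹ * x * (s * y) = 0) ↔ (0 ≤ x ∧ 0 ≤ y ∧ x * y = 0) := by
  have hprod : s⁻¹ * x * (s * y) = x * y := by
    field_simp
  rw [mul_nonneg_iff_of_pos_left (inv_pos.2 hs), mul_nonneg_iff_of_pos_left hs, hprod]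

/-- Characterization of the equilibria of the closed-loop system: a tuple is an equilibrium iff
its price component solves the scalar linear complementarity relation and all other components
take the stated closed forms. -/
theorem stmt_12 (N : ℕ) (hN : 0 < N) (q c₀ a : Fin N → ℝ) (hq : ∀ i, 0 < q i)
    (lamMax : ℝ) (φ : ℝ → Fin N → ℝ)
    (hφ : ∀ lam i, φ lam i = -(lam + c₀ i) / q i)
    (xb ρb εb : Fin N → ℝ) (lamb : ℝ) (ub πb : Fin N → ℝ) (νb μb : ℝ) :
    ((∀ i, 0 = -(q i * xb i) - c₀ i - ρb i - ub i) ∧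
        (∀ i, 0 = xb i - a i - εb i) ∧
        (∀ i, 0 = ρb i - lamb) ∧
        (0 = ∑ i, εb i) ∧
        (∀ i, 0 = -(ub i) / q i - q i * πb i - xb i - (c₀ i + lamMax) / q i) ∧
        (∀ i, 0 = q i * ub i - νb) ∧
        (0 = (∑ i, πb i) + μb) ∧
        0 ≤ νb ∧ 0 ≤ μb ∧ νb * μb = 0) ↔
      ((0 ≤ ∑ i, (φ lamb i - a i) ∧ 0 ≤ lamMax - lamb ∧
          (∑ i, (φ lamb i - a i)) * (lamMax - lamb) = 0) ∧
        νb = (∑ i, 1 / (q i) ^ 2)⁻¹ * ∑ i, (φ lamb i - a i) ∧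
        (∀ i, xb i = φ lamb i - νb / (q i) ^ 2) ∧
        (∀ i, ub i = νb / q i) ∧
        (∀ i, ρb i = lamb) ∧
        (∀ i, εb i = xb i - a i) ∧
        (∀ i, πb i = (lamb - lamMax) / (q i) ^ 2) ∧
        μb = (∑ i, 1 / (q i) ^ 2) * (lamMax - lamb)) := by
  have hqne i : q i ≠ 0 := (hq i).ne'
  have hS : 0 < ∑ i, 1 / q i ^ 2 :=
    sum_pos (fun i _ => by have := hq i; positivity) ⟨⟨0, hN⟩, mem_univ _⟩
  have hε_excess (hx : ∀ i, xb i = φ lamb i - νb / q i ^ 2) (hε : ∀ i, εb i = xb i - a i) i :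
      εb i = (φ lamb i - a i) - νb / q i ^ 2 := by
    rw [hε, hx]
    ring
  constructor
  · rintro ⟨h₁, h₂, h₃, h₄, h₅, h₆, h₇, hν, hμ, hνμ⟩
    have hρ i : ρb i = lamb := by linarith [h₃ i]
    have hu i := (zero_eq_mul_sub_iff_eq_div (hqne i)).1 (h₆ i)
    have hx i := (stationarity_iff (hqne i) (hφ lamb i) (hρ i) (hu i)).1 (h₁ i)
    have hε i : εb i = xb i - a i := by linarith [h₂ i]
    have hπ i := (costate_iff (hqne i) (hφ lamb i) (hu i) (hx i)).1 (h₅ i)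
    have hνb := (zero_eq_sum_iff (hε_excess hx hε) hS.ne').1 h₄
    have hμb := (zero_eq_sum_add_iff hπ).1 h₇
    exact ⟨(complementarity_rescale_iff hS).1 (hνb ▸ hμb ▸ ⟨hν, hμ, hνμ⟩), hνb, hx, hu, hρ, hε, hπ, hμb⟩
  · rintro ⟨hlcp, hνb, hx, hu, hρ, hε, hπ, hμb⟩
    exact ⟨fun i => (stationarity_iff (hqne i) (hφ lamb i) (hρ i) (hu i)).2 (hx i),
      fun i => by linarith [hε i], fun i => by linarith [hρ i],
      (zero_eq_sum_iff (hε_excess hx hε) hS.ne').2 hνb,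
      fun i => (costate_iff (hqne i) (hφ lamb i) (hu i) (hx i)).2 (hπ i),
      fun i => (zero_eq_mul_sub_iff_eq_div (hqne i)).2 (hu i),
      (zero_eq_sum_add_iff hπ).2 hμb, hνb ▸ hμb ▸ (complementarity_rescale_iff hS).2 hlcp⟩
end

section
/- The equilibrium system in (x̄, ρ̄, ε̄, λ̄, ū, π̄, ν̄, μ̄) ∈ ℝ^N × ℝ^N × ℝ^N × ℝ × ℝ^N × ℝ^N × ℝ × ℝ given by: 0 = −qᵢ·x̄ᵢ − c₀ᵢ − ρ̄ᵢ − ūᵢ for all i; 0 = x̄ᵢ − aᵢ − ε̄ᵢ for all i; 0 = ρ̄ᵢ − λ̄ for all i; 0 = Σᵢ ε̄ᵢ; 0 = −ūᵢ/qᵢ − qᵢ·π̄ᵢ − x̄ᵢ − (c₀ᵢ + λmax)/qᵢ for all i; 0 = qᵢ·ūᵢ − ν̄ for all i; 0 = Σᵢ π̄ᵢ + μ̄; ν̄ ≥ 0; μ̄ ≥ 0; ν̄·μ̄ = 0, has exactly one solution. -/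
/-!
Once `λ̄` and `ν̄` are fixed, every other unknown is determined pointwise by the equations, and
what remains of the system is the scalar complementarity problem `λ̄ S₁ + ν̄ S₂ = -A`,
`0 ≤ ν̄ ⊥ λmax - λ̄ ≥ 0`, where `S₁ = ∑ 1/qᵢ > 0`, `S₂ = ∑ 1/qᵢ² > 0`, `A = ∑ (aᵢ + c₀ᵢ/qᵢ)`.
Its solution is unique because along the line `λ S₁ + ν S₂ = -A` the multiplier `ν` strictly
decreases as `λ` increases, while complementarity forces `ν = 0` whenever `λ < λmax`.
-/

open Finset

section Complementarity

variable {K : Type*} [Field K] [LinearOrder K] [IsStrictOrderedRing K]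

def IsComplementaritySolution (S₁ S₂ b L : K) (z : K × K) : Prop :=
  z.1 * S₁ + z.2 * S₂ = b ∧ 0 ≤ z.2 ∧ z.1 ≤ L ∧ z.2 * (L - z.1) = 0

variable {S₁ S₂ b L : K}

theorem IsComplementaritySolution.fst_le (h₁ : 0 < S₁) (h₂ : 0 < S₂)
    {z w : K × K} (hz : IsComplementaritySolution S₁ S₂ b L z)
    (hw : IsComplementaritySolution S₁ S₂ b L w) : z.1 ≤ w.1 := by
  obtain ⟨hz, hz₂, hz₁, -⟩ := hz
  obtain ⟨hw, -, -, hwc⟩ := hw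
  by_contra! hlt
  have hw₂ : w.2 = 0 := (mul_eq_zero.1 hwc).resolve_right (by linarith)
  rw [hw₂] at hw
  nlinarith [mul_lt_mul_of_pos_right hlt h₁]

theorem existsUnique_isComplementaritySolution (h₁ : 0 < S₁) (h₂ : 0 < S₂) :
    ∃! z, IsComplementaritySolution S₁ S₂ b L z := by
  refine existsUnique_of_exists_of_unique ?_ fun z w hz hw => ?_
  · rcases le_or_gt (b - L * S₁) 0 with h | h
    · refine ⟨(b / S₁, 0), by field_simp; ring, le_rfl, ?_, by ring⟩
      rwa [div_le_iff₀ h₁, ← sub_nonpos]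
    · refine ⟨(L, (b - L * S₁) / S₂), by field_simp; ring, by positivity, le_rfl, by simp⟩
  · have hfst : z.1 = w.1 := (hz.fst_le h₁ h₂ hw).antisymm (hw.fst_le h₁ h₂ hz)
    have hsnd : z.2 * S₂ = w.2 * S₂ := by linarith [hfst ▸ hz.1, hw.1]
    exact Prod.ext hfst (mul_right_cancel₀ h₂.ne' hsnd)

end Complementarity

namespace ClosedLoop

variable {N : ℕ} (q c₀ a : Fin N → ℝ) (lamMax : ℝ)

abbrev State (N : ℕ) : Type :=
  (Fin N → ℝ) × (Fin N → ℝ) × (Fin N → ℝ) × ℝ × (Fin N → ℝ) × (Fin N → ℝ) × ℝ × ℝ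

def IsEquilibrium (p : State N) : Prop :=
  (∀ i, 0 = -(q i * p.1 i) - c₀ i - p.2.1 i - p.2.2.2.2.1 i) ∧
  (∀ i, 0 = p.1 i - a i - p.2.2.1 i) ∧
  (∀ i, 0 = p.2.1 i - p.2.2.2.1) ∧
  (0 = ∑ i, p.2.2.1 i) ∧
  (∀ i, 0 = -(p.2.2.2.2.1 i) / q i - q i * p.2.2.2.2.2.1 i - p.1 i - (c₀ i + lamMax) / q i) ∧
  (∀ i, 0 = q i * p.2.2.2.2.1 i - p.2.2.2.2.2.2.1) ∧
  (0 = (∑ i, p.2.2.2.2.2.1 i) + p.2.2.2.2.2.2.2) ∧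
  0 ≤ p.2.2.2.2.2.2.1 ∧ 0 ≤ p.2.2.2.2.2.2.2 ∧
  p.2.2.2.2.2.2.1 * p.2.2.2.2.2.2.2 = 0

def multipliers (p : State N) : ℝ × ℝ := (p.2.2.2.1, p.2.2.2.2.2.2.1)

noncomputable def ofMultipliers (z : ℝ × ℝ) : State N :=
  (fun i => -(c₀ i + z.1) / q i - z.2 / q i ^ 2,
   fun _ => z.1,
   fun i => -(c₀ i + z.1) / q i - z.2 / q i ^ 2 - a i,
   z.1,
   fun i => z.2 / q i,
   fun i => (z.1 - lamMax) / q i ^ 2,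
   z.2,
   (lamMax - z.1) * ∑ i, (q i ^ 2)⁻¹)

theorem IsEquilibrium.eq_ofMultipliers (hq : ∀ i, q i ≠ 0) {p : State N}
    (hp : IsEquilibrium q c₀ a lamMax p) :
    p = ofMultipliers q c₀ a lamMax (multipliers p) := by
  obtain ⟨x, ρ, ε, l, u, π, ν, μ⟩ := p
  obtain ⟨h₁, h₂, h₃, -, h₅, h₆, h₇, -⟩ := hp
  dsimp only at h₁ h₂ h₃ h₅ h₆ h₇
  have hρ : ∀ i, ρ i = l := fun i => by linarith [h₃ i]
  have hu : ∀ i, u i = ν / q i := fun i => by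
    field_simp [hq i]; linarith [h₆ i]
  have hx : ∀ i, x i = -(c₀ i + l) / q i - ν / q i ^ 2 := fun i => by
    have := h₁ i
    rw [hρ i, hu i] at this
    field_simp [hq i] at this ⊢
    linear_combination this
  have hπ : ∀ i, π i = (l - lamMax) / q i ^ 2 := fun i => by
    have := h₅ i
    rw [hu i, hx i] at this
    field_simp [hq i] at this ⊢
    exact mul_left_cancel₀ (hq i) (by linear_combination this)
  have hμ : μ = (lamMax - l) * ∑ i, (q i ^ 2)⁻¹ := by
    simp only [hπ, div_eq_mul_inv, ← mul_sum] at h₇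
    linarith
  simp only [ofMultipliers, multipliers, Prod.mk.injEq, true_and]
  exact ⟨funext hx, funext hρ, funext fun i => by linarith [h₂ i, hx i], funext hu, funext hπ, hμ⟩

theorem isEquilibrium_ofMultipliers_iff (hq : ∀ i, q i ≠ 0) (hS₂ : 0 < ∑ i, (q i ^ 2)⁻¹)
    (z : ℝ × ℝ) :
    IsEquilibrium q c₀ a lamMax (ofMultipliers q c₀ a lamMax z) ↔
      IsComplementaritySolution (∑ i, (q i)⁻¹) (∑ i, (q i ^ 2)⁻¹) (-∑ i, (a i + c₀ i / q i))
        lamMax z := by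
  set S₂ := ∑ i, (q i ^ 2)⁻¹
  have hε : ∑ i, (-(c₀ i + z.1) / q i - z.2 / q i ^ 2 - a i) =
      -∑ i, (a i + c₀ i / q i) - (z.1 * ∑ i, (q i)⁻¹ + z.2 * S₂) := by
    simp only [S₂, mul_sum, ← sum_add_distrib, ← sum_neg_distrib, ← sum_sub_distrib]
    exact sum_congr rfl fun i _ => by ring
  have hπ : ∑ i, (z.1 - lamMax) / q i ^ 2 = (z.1 - lamMax) * S₂ := by
    simp only [S₂, mul_sum, div_eq_mul_inv]
  simp only [IsEquilibrium, ofMultipliers, IsComplementaritySolution, hε, hπ]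
  constructor
  · rintro ⟨-, -, -, h₄, -, -, -, h₈, h₉, h₁₀⟩
    refine ⟨by linarith, h₈, ?_, ?_⟩
    · nlinarith
    · rw [← mul_assoc] at h₁₀
      exact (mul_eq_zero.1 h₁₀).resolve_right hS₂.ne'
  · rintro ⟨hsum, hν, hle, hc⟩
    refine ⟨fun i => ?_, fun i => by ring, fun i => by ring, by linarith, fun i => ?_,
      fun i => ?_, by ring, hν, by nlinarith, by rw [← mul_assoc, hc, zero_mul]⟩
    all_goals field_simp [hq i]; ring

end ClosedLoop

open ClosedLoop in
/-- The closed-loop system admits exactly one equilibrium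
`(x̄, ρ̄, ε̄, λ̄, ū, π̄, ν̄, μ̄)`. -/
theorem stmt_13 (N : ℕ) (hN : 0 < N) (q c₀ a : Fin N → ℝ) (hq : ∀ i, 0 < q i)
    (lamMax : ℝ) :
    ∃! p : (Fin N → ℝ) × (Fin N → ℝ) × (Fin N → ℝ) × ℝ ×
        (Fin N → ℝ) × (Fin N → ℝ) × ℝ × ℝ,
      (∀ i, 0 = -(q i * p.1 i) - c₀ i - p.2.1 i - p.2.2.2.2.1 i) ∧
      (∀ i, 0 = p.1 i - a i - p.2.2.1 i) ∧
      (∀ i, 0 = p.2.1 i - p.2.2.2.1) ∧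
      (0 = ∑ i, p.2.2.1 i) ∧
      (∀ i, 0 = -(p.2.2.2.2.1 i) / q i - q i * p.2.2.2.2.2.1 i - p.1 i
          - (c₀ i + lamMax) / q i) ∧
      (∀ i, 0 = q i * p.2.2.2.2.1 i - p.2.2.2.2.2.2.1) ∧
      (0 = (∑ i, p.2.2.2.2.2.1 i) + p.2.2.2.2.2.2.2) ∧
      0 ≤ p.2.2.2.2.2.2.1 ∧ 0 ≤ p.2.2.2.2.2.2.2 ∧
      p.2.2.2.2.2.2.1 * p.2.2.2.2.2.2.2 = 0 := by
  have : Nonempty (Fin N) := Fin.pos_iff_nonempty.mp hN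
  have hq₀ : ∀ i, q i ≠ 0 := fun i => (hq i).ne'
  have hS₁ : 0 < ∑ i, (q i)⁻¹ := sum_pos (fun i _ => inv_pos.2 (hq i)) univ_nonempty
  have hS₂ : 0 < ∑ i, (q i ^ 2)⁻¹ := sum_pos (fun i _ => by have := hq i; positivity) univ_nonempty
  obtain ⟨z, hz, hz_unique⟩ := existsUnique_isComplementaritySolution
    (b := -∑ i, (a i + c₀ i / q i)) (L := lamMax) hS₁ hS₂
  have hequiv := isEquilibrium_ofMultipliers_iff q c₀ a lamMax hq₀ hS₂
  refine ⟨ofMultipliers q c₀ a lamMax z, (hequiv z).2 hz, fun p hp => ?_⟩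
  obtain ⟨w, rfl⟩ : ∃ w, p = ofMultipliers q c₀ a lamMax w :=
    ⟨_, IsEquilibrium.eq_ofMultipliers q c₀ a lamMax hq₀ hp⟩
  rw [hz_unique w ((hequiv w).1 hp)]
end
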